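/- arXiv:1705.02929 — 5 statements merged into one kernel-verified Lean document; each statement's English description precedes it below -/
import Mathlib

section
/- If G ≤ Sym(Ω) is a p-group for a prime p, then its 2-closure G^(2) is also a p-group. -/
open scoped Classical Pointwise

noncomputable section

variable {H : Type*}

/-- The simple quantity of a subset `T` of `H` in the group algebra `ℚ H`. -/
def simpleQ [Group H] [Fintype H] (T : Set H) : MonoidAlgebra ℚ H :=
  ∑ h ∈ T.toFinset, MonoidAlgebra.single h (1 : ℚ)

/-- An S-ring over a finite group `H`: a partition of `H` containing `{1}`,
closed under inversion, whose simple quantities span a subalgebra of `ℚ H`. -/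
structure SRing (H : Type*) [Group H] [Fintype H] where
  basicSets : Set (Set H)
  exists_unique_mem : ∀ h : H, ∃! T, T ∈ basicSets ∧ h ∈ T
  nonempty_of_mem : ∀ T ∈ basicSets, T.Nonempty
  one_mem : ({1} : Set H) ∈ basicSets
  inv_mem : ∀ T ∈ basicSets, T⁻¹ ∈ basicSets
  mul_mem : ∀ T ∈ basicSets, ∀ S ∈ basicSets,
    simpleQ T * simpleQ S ∈ Submodule.span ℚ (simpleQ '' basicSets)

namespace SRing

variable [Group H] [Fintype H]

/-- The underlying ℚ-subspace of the S-ring. -/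
def carrier (A : SRing H) : Submodule ℚ (MonoidAlgebra ℚ H) :=
  Submodule.span ℚ (simpleQ '' A.basicSets)

/-- `S` is an `𝒜`-subset: its simple quantity lies in `𝒜`. -/
def IsSubset (A : SRing H) (S : Set H) : Prop := simpleQ S ∈ A.carrier

/-- The thin radical of the S-ring. -/
def thin (A : SRing H) : Set H := {g | ({g} : Set H) ∈ A.basicSets}

end SRing

/-- The radical of a subset `S`: elements `h` with `hS = Sh = S`. -/
def radSet [Group H] (S : Set H) : Set H := {h | {h} * S = S ∧ S * {h} = S}

/-- The automorphism group of the Cayley digraph `Cay(H, T)`. -/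
def cayAut [Group H] (T : Set H) : Subgroup (Equiv.Perm H) where
  carrier := {g | ∀ x y : H, y * x⁻¹ ∈ T ↔ g y * (g x)⁻¹ ∈ T}
  one_mem' := by intro x y; simp
  mul_mem' := by
    intro a b ha hb x y
    simpa [Equiv.Perm.mul_apply] using (hb x y).trans (ha (b x) (b y))
  inv_mem' := by
    intro a ha x y
    simpa using (ha (a⁻¹ x) (a⁻¹ y)).symm

/-- The automorphism group of an S-ring. -/
def SRing.aut [Group H] [Fintype H] (A : SRing H) : Subgroup (Equiv.Perm H) :=
  ⨅ T ∈ A.basicSets, cayAut T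

/-- The right regular representation of `H` inside `Sym(H)`. -/
def rightRegular (H : Type*) [Group H] : Subgroup (Equiv.Perm H) where
  carrier := Set.range fun h : H => Equiv.mulRight h
  one_mem' := ⟨1, by ext x; simp⟩
  mul_mem' := by
    rintro _ _ ⟨a, rfl⟩ ⟨b, rfl⟩
    exact ⟨b * a, by ext x; simp [mul_assoc]⟩
  inv_mem' := by
    rintro _ ⟨a, rfl⟩
    exact ⟨a⁻¹, by ext x; simp⟩

/-- The orbit of `h` under the stabilizer of the identity in `G ≤ Sym(H)`. -/
def orbitOfStab [Group H] (G : Subgroup (Equiv.Perm H)) (h : H) : Set H :=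
  {x | ∃ g ∈ G, g 1 = 1 ∧ g h = x}

/-- A Schurian S-ring: its basic sets are the orbits of the identity-stabilizer
of some overgroup of the right regular representation. -/
def SRing.IsSchurian [Group H] [Fintype H] (A : SRing H) : Prop :=
  ∃ G : Subgroup (Equiv.Perm H), rightRegular H ≤ G ∧
    A.basicSets = {S | ∃ h : H, S = orbitOfStab G h}

/-- A p-S-ring: all basic sets have `p`-power size. -/
def SRing.IsPSRing [Group H] [Fintype H] (A : SRing H) (p : ℕ) : Prop :=
  ∀ T ∈ A.basicSets, ∃ k : ℕ, Nat.card T = p ^ k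

/-- A decomposable S-ring: a nontrivial `E/F`-wreath product. -/
def SRing.Decomposable [Group H] [Fintype H] (A : SRing H) : Prop :=
  ∃ E F : Subgroup H, F.Normal ∧ F ≤ E ∧ E ≠ ⊤ ∧ F ≠ ⊥ ∧
    A.IsSubset ↑E ∧ A.IsSubset ↑F ∧
    ∀ T ∈ A.basicSets, T ⊆ ((E : Set H))ᶜ → (F : Set H) ⊆ radSet T

/-- The 2-closure of a permutation group `G ≤ Sym(Ω)`: all permutations
preserving every `G`-orbit on `Ω × Ω`. -/
def twoClosure {Ω : Type*} (G : Subgroup (Equiv.Perm Ω)) : Subgroup (Equiv.Perm Ω) where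
  carrier := {γ | ∀ a b : Ω, ∃ g ∈ G, g a = γ a ∧ g b = γ b}
  one_mem' := fun a b => ⟨1, G.one_mem, rfl, rfl⟩
  mul_mem' := by
    intro γ δ hγ hδ a b
    obtain ⟨g, hg, hga, hgb⟩ := hδ a b
    obtain ⟨g', hg', hg'a, hg'b⟩ := hγ (δ a) (δ b)
    exact ⟨g' * g, G.mul_mem hg' hg, by simp [Equiv.Perm.mul_apply, hga, hg'a],
      by simp [Equiv.Perm.mul_apply, hgb, hg'b]⟩
  inv_mem' := by
    intro γ hγ a b
    obtain ⟨g, hg, hga, hgb⟩ := hγ (γ⁻¹ a) (γ⁻¹ b)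
    have h1 : g (γ⁻¹ a) = a := by rw [hga]; exact γ.apply_symm_apply a
    have h2 : g (γ⁻¹ b) = b := by rw [hgb]; exact γ.apply_symm_apply b
    refine ⟨g⁻¹, G.inv_mem hg, ?_, ?_⟩
    · exact g.injective (by rw [h1]; exact g.apply_symm_apply a)
    · exact g.injective (by rw [h2]; exact g.apply_symm_apply b)

/-!
Wielandt's argument, by induction on `|Ω|`. A nontrivial `p`-group `G` has a nontrivial centre
`Z`, and every element of `G^(2)` commutes with `Z`: on the pair `(x, z x)` it agrees with some
`g ∈ G`, which commutes with `z`. So `G^(2)` permutes the `Z`-orbits, and its image there lies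
in the 2-closure of the image of `G`, a `p`-group on fewer points. By induction some `σ^(p^k)`
fixes every `Z`-orbit; a permutation that fixes every `Z`-orbit and commutes with `Z` acts on
each orbit as an element of `Z`, so its `|G|`-th power is trivial.
-/

open MulAction Subgroup

theorem IsPGroup.inf_centralizer_ne_bot {K : Type*} [Group K] {p : ℕ} [Fact p.Prime]
    {G : Subgroup K} [Finite G] (hG : IsPGroup p G) (hGne : G ≠ ⊥) :
    G ⊓ centralizer (G : Set K) ≠ ⊥ := by
  have := (nontrivial_iff_ne_bot G).mpr hGne
  have := hG.center_nontrivial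
  obtain ⟨c, hc⟩ := exists_ne (1 : center G)
  refine ne_bot_iff_exists_ne_one.mpr ⟨⟨c, (c : G).2, mem_centralizer_iff.mpr fun g hg => ?_⟩, ?_⟩
  · exact congrArg Subtype.val (mem_center_iff.mp c.2 ⟨g, hg⟩)
  · intro h
    have hc1 : ((c : G) : K) = 1 := congrArg Subtype.val h
    exact hc (Subtype.ext (Subtype.ext hc1))

section

variable {Ω : Type*}

theorem twoClosure_bot : twoClosure (⊥ : Subgroup (Equiv.Perm Ω)) = ⊥ := by
  refine eq_bot_iff.mpr fun σ hσ => (mem_bot).mpr (Equiv.ext fun x => ?_)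
  obtain ⟨g, hg, hgx, -⟩ := hσ x x
  rw [← hgx, (mem_bot).mp hg]

theorem twoClosure_le_centralizer_centralizer (G : Subgroup (Equiv.Perm Ω)) :
    twoClosure G ≤ centralizer (centralizer (G : Set (Equiv.Perm Ω)) : Set (Equiv.Perm Ω)) := by
  intro τ hτ
  rw [mem_centralizer_iff]
  intro z hz
  ext x
  obtain ⟨g, hg, hgx, hgzx⟩ := hτ x (z x)
  calc z (τ x) = z (g x) := by rw [hgx]
    _ = g (z x) := by rw [← Equiv.Perm.mul_apply, ← mem_centralizer_iff.mp hz g hg]; rfl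
    _ = τ (z x) := hgzx

variable (Z : Subgroup (Equiv.Perm Ω))

theorem orbitRel_apply_of_mem_centralizer {τ : Equiv.Perm Ω} (hτ : τ ∈ centralizer (Z : Set _))
    {x y : Ω} (h : orbitRel Z Ω x y) : orbitRel Z Ω (τ x) (τ y) := by
  obtain ⟨w, rfl⟩ := h
  refine ⟨w, ?_⟩
  show (w : Equiv.Perm Ω) (τ y) = τ ((w : Equiv.Perm Ω) y)
  rw [← Equiv.Perm.mul_apply, mem_centralizer_iff.mp hτ w w.2]
  rfl

theorem orbitRel_iff_of_mem_centralizer {τ : Equiv.Perm Ω} (hτ : τ ∈ centralizer (Z : Set _))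
    (x y : Ω) : orbitRel Z Ω x y ↔ orbitRel Z Ω (τ x) (τ y) := by
  refine ⟨orbitRel_apply_of_mem_centralizer Z hτ, fun h => ?_⟩
  simpa using orbitRel_apply_of_mem_centralizer Z (inv_mem hτ) h

def permOrbits : centralizer (Z : Set (Equiv.Perm Ω)) →* Equiv.Perm (orbitRel.Quotient Z Ω) where
  toFun τ := Quotient.congr τ.1 (orbitRel_iff_of_mem_centralizer Z τ.2)
  map_one' := by ext ⟨x⟩; rfl
  map_mul' _ _ := by ext ⟨x⟩; rfl

theorem card_orbitRel_quotient_lt [Finite Ω] (hZ : Z ≠ ⊥) :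
    Nat.card (orbitRel.Quotient Z Ω) < Nat.card Ω := by
  obtain ⟨w, hw⟩ := ne_bot_iff_exists_ne_one.mp hZ
  obtain ⟨x, hx⟩ : ∃ x, (w : Equiv.Perm Ω) x ≠ x := by
    by_contra! h
    exact hw (Subtype.ext (Equiv.ext h))
  have hsurj : Function.Surjective (Quotient.mk (orbitRel Z Ω)) := Quotient.mk_surjective
  refine (Nat.card_le_card_of_surjective _ hsurj).lt_of_ne fun hcard => hx ?_
  refine (hsurj.bijective_of_nat_card_le hcard.ge).injective (Quotient.sound ?_)
  exact ⟨w, rfl⟩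

theorem pow_eq_one_of_permOrbits_eq_one {n : ℕ} (hZ : ∀ w ∈ Z, w ^ n = 1)
    {τ : centralizer (Z : Set (Equiv.Perm Ω))} (hτ : permOrbits Z τ = 1) : τ ^ n = 1 := by
  ext x
  obtain ⟨w, hw⟩ : orbitRel Z Ω ((τ : Equiv.Perm Ω) x) x :=
    Quotient.exact (congrArg (· (Quotient.mk _ x)) hτ)
  have hfix : ((w : Equiv.Perm Ω)⁻¹ * τ) x = x := by
    rw [Equiv.Perm.mul_apply, ← hw]
    exact Equiv.symm_apply_apply _ x
  have hcomm : Commute ((w : Equiv.Perm Ω)⁻¹) τ :=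
    mem_centralizer_iff.mp τ.2 _ (inv_mem w.2)
  have hwn : ((w : Equiv.Perm Ω)⁻¹) ^ n = 1 := by rw [inv_pow, hZ w w.2, inv_one]
  simpa [hcomm.mul_pow, hwn] using Equiv.Perm.pow_apply_eq_self_of_apply_eq_self hfix n

theorem permOrbits_mem_twoClosure {G : Subgroup (Equiv.Perm Ω)}
    (hGZ : G ≤ centralizer Z) {τ : centralizer (Z : Set (Equiv.Perm Ω))}
    (hτ : (τ : Equiv.Perm Ω) ∈ twoClosure G) :
    permOrbits Z τ ∈ twoClosure ((G.subgroupOf (centralizer Z)).map (permOrbits Z)) := by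
  rintro ⟨x⟩ ⟨y⟩
  obtain ⟨g, hg, hgx, hgy⟩ := hτ x y
  refine ⟨permOrbits Z ⟨g, hGZ hg⟩, ⟨_, hg, rfl⟩, ?_, ?_⟩
  · exact congrArg (Quotient.mk _) hgx
  · exact congrArg (Quotient.mk _) hgy

end

/-- the 2-closure of a p-group is a p-group. -/
theorem stmt1 {Ω : Type*} [Finite Ω] {p : ℕ} (hp : p.Prime)
    (G : Subgroup (Equiv.Perm Ω)) (hG : IsPGroup p G) :
    IsPGroup p (twoClosure G) := by
  have := Fact.mk hp
  induction hn : Nat.card Ω using Nat.strong_induction_on generalizing Ω with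
  | _ n ih =>
  rcases eq_or_ne G ⊥ with rfl | hGne
  · rw [twoClosure_bot]
    exact IsPGroup.of_bot
  set Z := G ⊓ centralizer (G : Set (Equiv.Perm Ω))
  have hGZ : G ≤ centralizer Z := le_centralizer_iff.mp inf_le_right
  have hClosureZ : twoClosure G ≤ centralizer Z :=
    (twoClosure_le_centralizer_centralizer G).trans (centralizer_le inf_le_right)
  obtain ⟨m, hm⟩ := IsPGroup.iff_card.mp hG
  have hZexp : ∀ w ∈ Z, w ^ p ^ m = 1 := fun w hw => by
    rw [← hm]
    exact congrArg Subtype.val (pow_card_eq_one' (x := (⟨w, hw.1⟩ : G)))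
  rintro ⟨σ, hσ⟩
  obtain ⟨k, hk⟩ := ih _ (hn ▸ card_orbitRel_quotient_lt Z (hG.inf_centralizer_ne_bot hGne))
    _ (hG.comap_subtype.map (permOrbits Z)) rfl
    ⟨_, permOrbits_mem_twoClosure Z hGZ (τ := ⟨σ, hClosureZ hσ⟩) hσ⟩
  have hσk : permOrbits Z (⟨σ, hClosureZ hσ⟩ ^ p ^ k) = 1 := by
    rw [map_pow]
    exact congrArg Subtype.val hk
  refine ⟨k + m, Subtype.ext ?_⟩
  simpa [pow_add, pow_mul] using
    congrArg Subtype.val (pow_eq_one_of_permOrbits_eq_one Z hZexp hσk)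

end
end

section
/- Let H be a finite group and G ≤ Sym(H) a subgroup containing the group H_R of right translations. Then the rational span of the elements ∑_{h ∈ T} h for T ranging over the orbits of the point stabilizer G_1 on H is a subalgebra of the group algebra ℚH that is closed under the operations making it an S-ring (i.e., it contains the identity as a singleton class, its classes are closed under inversion, and it is closed under multiplication). -/
open scoped Classical Pointwise

noncomputable section

variable {H : Type*}

/-! Because `G` contains the right translations, conjugating `g ∈ G₁` by right translations stays in
`G₁`; hence `G₁` acts by automorphisms on every Cayley digraph `Cay(H, T)` with `T` a `G₁`-orbit.
Reading this on the arc `h → 1` shows that inversion maps orbits to orbits, and counting arcs shows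
that the coefficients of a product of two orbit sums are constant on `G₁`-orbits, so the product is
a combination of orbit sums. -/

open MulAction

section SimpleQuantities

variable {H : Type*} [Group H] [Fintype H]

lemma coeff_simpleQ (T : Set H) (z : H) :
    (simpleQ T).coeff z = if z ∈ T then 1 else 0 := by
  simp [simpleQ, MonoidAlgebra.coeff_sum, Finsupp.single_apply]

lemma coeff_simpleQ_mul_simpleQ (T S : Set H) (z : H) :
    (simpleQ T * simpleQ S).coeff z = ({y ∈ S.toFinset | z * y⁻¹ ∈ T} : Finset H).card := by
  simp only [simpleQ, Finset.sum_mul_sum, MonoidAlgebra.single_mul_single, one_mul,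
    MonoidAlgebra.coeff_sum, Finset.sum_apply', MonoidAlgebra.coeff_single, Finsupp.single_apply]
  rw [Finset.sum_comm, Finset.card_filter, Nat.cast_sum]
  refine Finset.sum_congr rfl fun y _ => ?_
  simp [← eq_mul_inv_iff_mul_eq]

lemma coeff_simpleQ_mul_simpleQ_apply_of_mem_cayAut {T S : Set H} {σ : Equiv.Perm H}
    (hT : σ ∈ cayAut T) (hS : σ ∈ cayAut S) (hσ : σ 1 = 1) (z : H) :
    (simpleQ T * simpleQ S).coeff (σ z) = (simpleQ T * simpleQ S).coeff z := by
  rw [coeff_simpleQ_mul_simpleQ, coeff_simpleQ_mul_simpleQ]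
  refine congrArg _ (Finset.card_equiv σ fun y => ?_).symm
  have hSy : y ∈ S ↔ σ y ∈ S := by simpa [hσ] using hS 1 y
  simp only [Finset.mem_filter, Set.mem_toFinset, hSy, hT y z]

theorem mem_span_simpleQ_orbit {K : Type*} [Group K] [MulAction K H] (f : MonoidAlgebra ℚ H)
    (hf : ∀ (k : K) (z : H), f.coeff (k • z) = f.coeff z) :
    f ∈ Submodule.span ℚ (simpleQ '' Set.range (orbit K)) := by
  have hexpand : f = ∑ q : orbitRel.Quotient K H, f.coeff q.out • simpleQ q.orbit := by
    ext w
    rw [MonoidAlgebra.coeff_sum, Finset.sum_apply', Finset.sum_eq_single ⟦w⟧]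
    · obtain ⟨k, hk⟩ := orbitRel_apply.mp (Quotient.mk_out (s := orbitRel K H) w)
      rw [MonoidAlgebra.coeff_smul_apply, coeff_simpleQ,
        if_pos (orbitRel.Quotient.mem_orbit.mpr rfl), smul_eq_mul, mul_one, ← hk, hf]
    · intro q _ hq
      rw [MonoidAlgebra.coeff_smul_apply, coeff_simpleQ,
        if_neg fun hw => hq (orbitRel.Quotient.mem_orbit.mp hw).symm, smul_zero]
    · simp
  rw [hexpand]
  refine Submodule.sum_mem _ fun q _ => Submodule.smul_mem _ _ (Submodule.subset_span ?_)
  exact ⟨q.orbit, ⟨q.out, (orbitRel.Quotient.orbit_eq_orbit_out q Quotient.out_eq').symm⟩, rfl⟩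

end SimpleQuantities

lemma MulAction.smul_mem_orbit_iff {G α : Type*} [Group G] [MulAction G α] (g : G) {a b : α} :
    g • a ∈ orbit G b ↔ a ∈ orbit G b := by
  rw [← orbit_eq_iff, ← orbit_eq_iff, orbit_smul]

section OrbitSRing

variable {H : Type*} [Group H] {K : Subgroup (Equiv.Perm H)}

lemma orbit_one_of_le_stabilizer (hK1 : K ≤ stabilizer (Equiv.Perm H) (1 : H)) :
    orbit K (1 : H) = {1} := by
  ext x
  simp only [mem_orbit_iff, Set.mem_singleton_iff]
  exact ⟨fun ⟨k, hk⟩ => hk ▸ hK1 k.2, fun hx => ⟨1, hx ▸ one_smul _ _⟩⟩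

lemma inv_mem_orbit_inv (hK1 : K ≤ stabilizer (Equiv.Perm H) (1 : H))
    (hKcay : ∀ h : H, K ≤ cayAut (orbit K h)) {h x : H} (hx : x ∈ orbit K h) :
    x⁻¹ ∈ orbit K h⁻¹ := by
  obtain ⟨k, rfl⟩ := hx
  have hk1 : (k : Equiv.Perm H) 1 = 1 := hK1 k.2
  -- `k` moves the arc `h → 1` of `Cay(H, orbit K h⁻¹)` to the arc `k h → 1`
  have harc := (hKcay h⁻¹ k.2 h 1).mp (by simp [mem_orbit_self])
  simpa [Subgroup.smul_def, hk1] using harc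

lemma orbit_inv (hK1 : K ≤ stabilizer (Equiv.Perm H) (1 : H))
    (hKcay : ∀ h : H, K ≤ cayAut (orbit K h)) (h : H) :
    (orbit K h)⁻¹ = orbit K h⁻¹ := by
  ext x
  refine ⟨fun hx => inv_inv x ▸ inv_mem_orbit_inv hK1 hKcay hx, fun hx => ?_⟩
  simpa using inv_mem_orbit_inv hK1 hKcay hx

variable (K) in
def SRing.ofOrbits [Fintype H] (hK1 : K ≤ stabilizer (Equiv.Perm H) (1 : H))
    (hKcay : ∀ h : H, K ≤ cayAut (orbit K h)) : SRing H where
  basicSets := Set.range (orbit K)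
  exists_unique_mem h := ⟨orbit K h, ⟨⟨h, rfl⟩, mem_orbit_self h⟩,
    fun _ ⟨⟨_, hT⟩, hh⟩ => hT ▸ (orbit_eq_iff.mpr (hT ▸ hh)).symm⟩
  nonempty_of_mem := by
    rintro _ ⟨h, rfl⟩
    exact nonempty_orbit h
  one_mem := ⟨1, orbit_one_of_le_stabilizer hK1⟩
  inv_mem := by
    rintro _ ⟨h, rfl⟩
    exact ⟨h⁻¹, (orbit_inv hK1 hKcay h).symm⟩
  mul_mem := by
    rintro _ ⟨a, rfl⟩ _ ⟨b, rfl⟩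
    exact mem_span_simpleQ_orbit _ fun k z =>
      coeff_simpleQ_mul_simpleQ_apply_of_mem_cayAut (hKcay a k.2) (hKcay b k.2) (hK1 k.2) z

end OrbitSRing

section PointStabilizer

variable {H : Type*} [Group H]

/-- The point stabilizer `G₁`. -/
def pointStab (G : Subgroup (Equiv.Perm H)) : Subgroup (Equiv.Perm H) :=
  G ⊓ stabilizer (Equiv.Perm H) (1 : H)

lemma orbitOfStab_eq_orbit (G : Subgroup (Equiv.Perm H)) (h : H) :
    orbitOfStab G h = orbit (pointStab G) h := by
  ext x
  rw [mem_orbit_iff]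
  constructor
  · rintro ⟨g, hg, hg1, rfl⟩
    exact ⟨⟨g, hg, hg1⟩, rfl⟩
  · rintro ⟨⟨g, hg, hg1⟩, rfl⟩
    exact ⟨g, hg, hg1, rfl⟩

lemma pointStab_le_cayAut {G : Subgroup (Equiv.Perm H)} (hG : rightRegular H ≤ G) (h : H) :
    pointStab G ≤ cayAut (orbit (pointStab G) h) := by
  intro g hg x y
  have hc : (Equiv.mulRight (g x))⁻¹ * g * Equiv.mulRight x ∈ pointStab G := by
    refine ⟨G.mul_mem (G.mul_mem (G.inv_mem (hG ⟨g x, rfl⟩)) hg.1) (hG ⟨x, rfl⟩), ?_⟩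
    simp [mem_stabilizer_iff]
  have hcyx : (⟨_, hc⟩ : pointStab G) • (y * x⁻¹) = g y * (g x)⁻¹ := by
    simp [Subgroup.smul_def]
  rw [← hcyx, smul_mem_orbit_iff]

end PointStabilizer

/-- the transitivity module of `G₁` is an S-ring over `H`. -/
theorem stmt2 {H : Type*} [Group H] [Fintype H]
    (G : Subgroup (Equiv.Perm H)) (hG : rightRegular H ≤ G) :
    ∃ A : SRing H, A.basicSets = {S : Set H | ∃ h : H, S = orbitOfStab G h} := by
  refine ⟨SRing.ofOrbits (pointStab G) inf_le_right (pointStab_le_cayAut hG), ?_⟩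
  ext S
  simp [SRing.ofOrbits, orbitOfStab_eq_orbit, eq_comm]

end
end

section
/- Let 𝒜 be a p-S-ring over a finite p-group H. Then the thin radical O(𝒜) is non-trivial, i.e., there exists a non-identity element g ∈ H such that {g} is a basic set of 𝒜. -/
open scoped Classical Pointwise

noncomputable section

variable {H : Type*}

theorem Setoid.IsPartition.card_modEq_card_singletons {α : Type*} [Finite α] {P : Set (Set α)}
    (hP : Setoid.IsPartition P) {p : ℕ} (hpow : ∀ t ∈ P, ∃ k, Nat.card t = p ^ k) :
    Nat.card α ≡ Nat.card {a : α | {a} ∈ P} [MOD p] := by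
  set S := {a : α | {a} ∈ P}
  have eq_singleton_of_mem : ∀ t ∈ P, ∀ a ∈ t, a ∈ S → t = {a} := fun t ht a hat haS =>
    (hP.2 a).unique ⟨ht, hat⟩ ⟨haS, rfl⟩
  have dvd_part : ∀ t : P, p ∣ (Sᶜ ∩ (t : Set α)).ncard := by
    rintro ⟨t, ht⟩
    by_cases hsing : ∃ a, t = {a}
    · obtain ⟨a, rfl⟩ := hsing
      have haS : a ∈ S := ht
      simp [haS]
    · have htS : t ⊆ Sᶜ := fun a hat haS => hsing ⟨a, eq_singleton_of_mem t ht a hat haS⟩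
      obtain ⟨k, hk⟩ := hpow t ht
      rw [Set.inter_eq_right.mpr htS, ← Nat.card_coe_set_eq, hk]
      rcases k with _ | k
      · exact absurd (Set.ncard_eq_one.mp (by rwa [← Nat.card_coe_set_eq])) hsing
      · exact dvd_pow_self p k.succ_ne_zero
  have hcompl : p ∣ Sᶜ.ncard := by
    rw [hP.ncard_eq_finsum Sᶜ]
    exact finsum_induction (p ∣ ·) (dvd_zero p) (fun _ _ => dvd_add) dvd_part
  calc Nat.card α = S.ncard + Sᶜ.ncard := (Set.ncard_add_ncard_compl S).symm
    _ ≡ S.ncard + 0 [MOD p] := Nat.ModEq.add_left _ ((Nat.modEq_zero_iff_dvd).mpr hcompl)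
    _ = Nat.card S := by rw [add_zero, Nat.card_coe_set_eq]

namespace SRing

variable {H : Type*} [Group H] [Fintype H]

theorem isPartition (A : SRing H) : Setoid.IsPartition A.basicSets :=
  ⟨fun h => Set.not_nonempty_empty (A.nonempty_of_mem ∅ h), A.exists_unique_mem⟩

theorem IsPSRing.card_modEq_card_thin {A : SRing H} {p : ℕ} (hA : A.IsPSRing p) :
    Nat.card H ≡ Nat.card A.thin [MOD p] :=
  A.isPartition.card_modEq_card_singletons hA

end SRing

/-- the thin radical of a p-S-ring over a nontrivial p-group is
non-trivial. -/
theorem stmt7 {H : Type*} [Group H] [Fintype H] [Nontrivial H] {p : ℕ}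
    (hp : p.Prime) (hpH : IsPGroup p H) (A : SRing H) (hA : A.IsPSRing p) :
    ∃ g : H, g ≠ 1 ∧ ({g} : Set H) ∈ A.basicSets := by
  have : Fact p.Prime := ⟨hp⟩
  obtain ⟨n, hn, hcard⟩ := hpH.nontrivial_iff_card.mp ‹_›
  have hp_dvd_thin : p ∣ A.thin.ncard := by
    rw [← Nat.card_coe_set_eq, ← hA.card_modEq_card_thin.dvd_iff dvd_rfl, hcard]
    exact dvd_pow_self p hn.ne'
  have hthin : 1 < A.thin.ncard :=
    hp.one_lt.trans_le (Nat.le_of_dvd ((Set.ncard_pos).mpr ⟨1, A.one_mem⟩) hp_dvd_thin)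
  obtain ⟨g, hg_thin, hg⟩ := Set.exists_ne_of_one_lt_ncard hthin 1
  exact ⟨g, hg, hg_thin⟩
end
end

section
/- Let 𝒜 be a Schurian S-ring over a finite group H. Then the thin radical satisfies O(𝒜) = {h ∈ H : the left translation h_L centralizes Aut(𝒜) in Sym(H)}. -/
open scoped Classical Pointwise

noncomputable section

variable {H : Type*}

/-! A singleton basic set `{h}` makes every automorphism of `𝒜` an automorphism of the
Cayley digraph `Cay(H, {h})`, whose arcs are exactly the pairs `(x, h x)`; this means
precisely that it commutes with `h_L`. Conversely, if 𝒜 = V(H, K₁) then `K ≤ Aut(𝒜)`, and a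
permutation fixing `1` and commuting with `h_L` also fixes `h = h_L⁻¹ 1`, so the basic
set of `h` is the orbit `{h}`. -/

section

variable [Group H]

lemma mem_cayAut_singleton_iff {h : H} {g : Equiv.Perm H} :
    g ∈ cayAut ({h} : Set H) ↔ ∀ x, g (h⁻¹ * x) = h⁻¹ * g x := by
  have arc_iff : ∀ x y : H, y * x⁻¹ ∈ ({h} : Set H) ↔ x = h⁻¹ * y := fun x y => by
    rw [Set.mem_singleton_iff, mul_inv_eq_iff_eq_mul, eq_inv_mul_iff_mul_eq, eq_comm]
  constructor
  · intro hg x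
    exact (arc_iff _ _).1 <| (hg (h⁻¹ * x) x).1 <| (arc_iff _ _).2 rfl
  · intro hg x y
    rw [arc_iff, arc_iff, ← hg, g.injective.eq_iff]

lemma mul_inv_mem_orbitOfStab_iff {G : Subgroup (Equiv.Perm H)} (hG : rightRegular H ≤ G)
    (k x y : H) : y * x⁻¹ ∈ orbitOfStab G k ↔ ∃ σ ∈ G, σ 1 = x ∧ σ k = y := by
  constructor
  · rintro ⟨g, hg, hg1, hgk⟩
    refine ⟨Equiv.mulRight x * g, G.mul_mem (hG ⟨x, rfl⟩) hg, ?_, ?_⟩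
    · simp [Equiv.Perm.mul_apply, hg1]
    · simp [Equiv.Perm.mul_apply, hgk]
  · rintro ⟨σ, hσ, h1, hk⟩
    refine ⟨Equiv.mulRight x⁻¹ * σ, G.mul_mem (hG ⟨x⁻¹, rfl⟩) hσ, ?_, ?_⟩
    · simp [Equiv.Perm.mul_apply, h1]
    · simp [Equiv.Perm.mul_apply, hk]

lemma le_cayAut_orbitOfStab {G : Subgroup (Equiv.Perm H)} (hG : rightRegular H ≤ G) (k : H) :
    G ≤ cayAut (orbitOfStab G k) := by
  intro g hg x y
  rw [mul_inv_mem_orbitOfStab_iff hG, mul_inv_mem_orbitOfStab_iff hG]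
  constructor
  · rintro ⟨σ, hσ, h1, hk⟩
    exact ⟨g * σ, G.mul_mem hg hσ, by simp [h1], by simp [hk]⟩
  · rintro ⟨τ, hτ, h1, hk⟩
    exact ⟨g⁻¹ * τ, G.mul_mem (G.inv_mem hg) hτ, by simp [h1], by simp [hk]⟩

lemma orbitOfStab_eq_singleton {G : Subgroup (Equiv.Perm H)} {h : H}
    (hcomm : ∀ g ∈ G, ∀ x, g (h⁻¹ * x) = h⁻¹ * g x) : orbitOfStab G h = {h} := by
  ext x
  constructor
  · rintro ⟨g, hg, hg1, rfl⟩
    have := hcomm g hg h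
    rw [inv_mul_cancel, hg1, eq_inv_mul_iff_mul_eq, mul_one] at this
    exact this.symm
  · rintro rfl
    exact ⟨1, G.one_mem, rfl, rfl⟩

end

namespace SRing

variable [Group H] [Fintype H]

lemma mem_aut_iff {A : SRing H} {g : Equiv.Perm H} :
    g ∈ A.aut ↔ ∀ T ∈ A.basicSets, g ∈ cayAut T := by
  simp [SRing.aut, Subgroup.mem_iInf]

lemma le_aut_of_basicSets_eq {A : SRing H} {G : Subgroup (Equiv.Perm H)}
    (hG : rightRegular H ≤ G) (hA : A.basicSets = {S | ∃ h : H, S = orbitOfStab G h}) :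
    G ≤ A.aut := by
  intro g hg
  rw [mem_aut_iff, hA]
  rintro _ ⟨k, rfl⟩
  exact le_cayAut_orbitOfStab hG k hg

lemma commute_of_mem_thin {A : SRing H} {h : H} (hh : h ∈ A.thin) {g : Equiv.Perm H}
    (hg : g ∈ A.aut) (x : H) : g (h⁻¹ * x) = h⁻¹ * g x :=
  mem_cayAut_singleton_iff.1 (mem_aut_iff.1 hg _ hh) x

end SRing

/-- for a Schurian S-ring, the thin radical consists exactly of
those `h` whose left translation centralizes `Aut(𝒜)`. -/
theorem stmt13 {H : Type*} [Group H] [Fintype H] (A : SRing H)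
    (hSch : A.IsSchurian) :
    A.thin = {h : H | ∀ g ∈ A.aut, ∀ x : H, g (h⁻¹ * x) = h⁻¹ * g x} := by
  obtain ⟨G, hG, hA⟩ := hSch
  refine Set.Subset.antisymm (fun h hh g hg => A.commute_of_mem_thin hh hg) ?_
  intro h hcomm
  have horb : orbitOfStab G h = {h} :=
    orbitOfStab_eq_singleton fun g hg => hcomm g (SRing.le_aut_of_basicSets_eq hG hA hg)
  change ({h} : Set H) ∈ A.basicSets
  rw [hA]
  exact ⟨h, horb.symm⟩

end
end

section
/- Let 𝒜 be an S-ring over a finite abelian group H, T a basic set of 𝒜, and k an integer coprime to |H|. Then the set T^(k) = {h^k : h ∈ T} is also a basic set of 𝒜. -/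
open scoped Classical Pointwise

noncomputable section

variable {H : Type*}

/-!
Schur's argument. The simple quantities of an S-ring span a subalgebra of `ℚ H` whose elements
have coefficients constant on basic sets, and a set is an `𝒜`-subset exactly when it is a union
of basic sets. For a prime `p ∤ |H|`, the integral element `(∑_{t ∈ T} t) ^ p` reduces
modulo `p` to `∑_{t ∈ T} t ^ p` (Frobenius; `H` is abelian and `x ↦ x ^ p` is injective), so
`T ^ (p)` is again a union of basic sets, and by multiplicativity so is `T ^ (n)` for every `n`
coprime to `|H|`. The permutations of `H` mapping `𝒜`-subsets to `𝒜`-subsets form a monoid,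
hence a group as `H` is finite, and such a permutation `σ` maps a basic set `T ∋ t` onto the
basic set containing `σ t`: the image contains that basic set, and `σ⁻¹` maps the latter onto a
union of basic sets containing `t`.
-/

section SimpleQuantity

variable {R : Type*}

instance MonoidAlgebra.charP [CommRing R] (p : ℕ) [CharP R p] [Monoid H] :
    CharP (MonoidAlgebra R H) p :=
  charP_of_injective_algebraMap' R p

variable [Fintype H]

def simpleQuantity (R : Type*) [Semiring R] (S : Set H) : MonoidAlgebra R H :=
  ∑ h ∈ S.toFinset, MonoidAlgebra.single h 1

theorem simpleQ_eq_simpleQuantity [Group H] (S : Set H) : simpleQ S = simpleQuantity ℚ S := rfl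

theorem coeff_simpleQuantity [Semiring R] (S : Set H) (h : H) :
    (simpleQuantity R S).coeff h = if h ∈ S then 1 else 0 := by
  simp [simpleQuantity, MonoidAlgebra.coeff_sum, Finsupp.single_apply]

theorem map_simpleQuantity [Monoid H] [Semiring R] {R' : Type*} [Semiring R'] (f : R →+* R')
    (S : Set H) : MonoidAlgebra.mapRingHom H f (simpleQuantity R S) = simpleQuantity R' S := by
  simp [simpleQuantity]

theorem simpleQuantity_pow_char [CommMonoid H] [CommRing R] (p : ℕ) [Fact p.Prime] [CharP R p]
    {S : Set H} (hS : Set.InjOn (· ^ p) S) :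
    simpleQuantity R S ^ p = simpleQuantity R ((· ^ p) '' S) := by
  rw [simpleQuantity, sum_pow_char, simpleQuantity, Set.toFinset_image,
    Finset.sum_image fun a ha b hb => hS (Set.mem_toFinset.1 ha) (Set.mem_toFinset.1 hb)]
  simp only [MonoidAlgebra.single_pow, one_pow]

end SimpleQuantity

namespace SRing

variable [Group H] [Fintype H] (A : SRing H)

theorem eq_of_mem {B B' : Set H} (hB : B ∈ A.basicSets) (hB' : B' ∈ A.basicSets) {a : H}
    (ha : a ∈ B) (ha' : a ∈ B') : B = B' :=
  (A.exists_unique_mem a).unique ⟨hB, ha⟩ ⟨hB', ha'⟩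

theorem isSubset_of_mem {B : Set H} (hB : B ∈ A.basicSets) : A.IsSubset B :=
  Submodule.subset_span ⟨B, hB, rfl⟩

theorem one_mem_carrier : (1 : MonoidAlgebra ℚ H) ∈ A.carrier := by
  simpa [IsSubset, simpleQ, MonoidAlgebra.one_def] using A.isSubset_of_mem A.one_mem

theorem mul_mem_carrier {x y : MonoidAlgebra ℚ H} (hx : x ∈ A.carrier) (hy : y ∈ A.carrier) :
    x * y ∈ A.carrier := by
  have hle : A.carrier * A.carrier ≤ A.carrier := by
    rw [carrier, Submodule.span_mul_span, Submodule.span_le]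
    rintro _ ⟨_, ⟨T, hT, rfl⟩, _, ⟨S, hS, rfl⟩, rfl⟩
    exact A.mul_mem T hT S hS
  exact hle (Submodule.mul_mem_mul hx hy)

def toSubalgebra : Subalgebra ℚ (MonoidAlgebra ℚ H) :=
  A.carrier.toSubalgebra A.one_mem_carrier fun _ _ => A.mul_mem_carrier

theorem coeff_eq_of_mem_carrier {x : MonoidAlgebra ℚ H} (hx : x ∈ A.carrier)
    {B : Set H} (hB : B ∈ A.basicSets) {a b : H} (ha : a ∈ B) (hb : b ∈ B) :
    x.coeff a = x.coeff b := by
  induction hx using Submodule.span_induction with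
  | mem z hz =>
    obtain ⟨S, hS, rfl⟩ := hz
    have hab : a ∈ S ↔ b ∈ S :=
      ⟨fun haS => A.eq_of_mem hB hS ha haS ▸ hb, fun hbS => A.eq_of_mem hB hS hb hbS ▸ ha⟩
    simp only [simpleQ_eq_simpleQuantity, coeff_simpleQuantity, hab]
  | zero => rfl
  | add x y _ _ hx hy => simp only [MonoidAlgebra.coeff_add, Finsupp.add_apply, hx, hy]
  | smul c x _ hx => simp only [MonoidAlgebra.coeff_smul, Finsupp.smul_apply, hx]

variable {A} in
theorem IsSubset.subset_of_mem {S B : Set H} (hS : A.IsSubset S)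
    (hB : B ∈ A.basicSets) {a : H} (ha : a ∈ B) (haS : a ∈ S) : B ⊆ S := by
  intro b hb
  have := A.coeff_eq_of_mem_carrier hS hB ha hb
  simp only [simpleQ_eq_simpleQuantity, coeff_simpleQuantity, if_pos haS] at this
  by_contra hbS
  simp [hbS] at this

theorem isSubset_of_forall_subset {S : Set H}
    (hS : ∀ B ∈ A.basicSets, ∀ a ∈ B, a ∈ S → B ⊆ S) : A.IsSubset S := by
  let basics := (Set.toFinite A.basicSets).toFinset.filter (· ⊆ S)
  have hB_mem : ∀ B ∈ basics, B ∈ A.basicSets := fun B hB =>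
    (Set.Finite.mem_toFinset _).1 (Finset.mem_filter.1 hB).1
  have hsum : simpleQ S = ∑ B ∈ basics, simpleQ B := by
    ext h
    simp only [simpleQ_eq_simpleQuantity, MonoidAlgebra.coeff_sum, Finsupp.finsetSum_apply,
      coeff_simpleQuantity]
    by_cases hhS : h ∈ S
    · obtain ⟨B₀, ⟨hB₀, hhB₀⟩, -⟩ := A.exists_unique_mem h
      have hB₀S : B₀ ∈ basics := by simpa [basics, hB₀] using hS B₀ hB₀ h hhB₀ hhS
      rw [if_pos hhS, Finset.sum_eq_single_of_mem B₀ hB₀S fun B hB hne =>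
        if_neg fun hhB => hne (A.eq_of_mem (hB_mem B hB) hB₀ hhB hhB₀), if_pos hhB₀]
    · exact (if_neg hhS).trans (Finset.sum_eq_zero fun B hB =>
        if_neg fun hhB => hhS (Set.mem_of_subset_of_mem (Finset.mem_filter.1 hB).2 hhB)).symm
  rw [IsSubset, hsum]
  exact Submodule.sum_mem _ fun B hB => A.isSubset_of_mem (hB_mem B hB)

def subsetPreserving : Submonoid (Equiv.Perm H) where
  carrier := {σ | ∀ S, A.IsSubset S → A.IsSubset (σ '' S)}
  one_mem' S hS := by simpa using hS
  mul_mem' {σ τ} hσ hτ S hS := by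
    simpa only [Equiv.Perm.coe_mul, Set.image_comp] using hσ _ (hτ S hS)

theorem inv_mem_subsetPreserving {σ : Equiv.Perm H} (hσ : σ ∈ A.subsetPreserving) :
    σ⁻¹ ∈ A.subsetPreserving := by
  have hinv : σ⁻¹ ∈ Submonoid.powers σ := by
    rw [← SetLike.mem_coe, powers_eq_zpowers]
    exact Subgroup.inv_mem _ (Subgroup.mem_zpowers σ)
  exact Submonoid.powers_le.2 hσ hinv

theorem image_mem_basicSets {σ : Equiv.Perm H} (hσ : σ ∈ A.subsetPreserving) {T : Set H}
    (hT : T ∈ A.basicSets) : σ '' T ∈ A.basicSets := by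
  obtain ⟨t, ht⟩ := A.nonempty_of_mem T hT
  obtain ⟨B, ⟨hB, htB⟩, -⟩ := A.exists_unique_mem (σ t)
  have hBT : B ⊆ σ '' T :=
    (hσ T (A.isSubset_of_mem hT)).subset_of_mem hB htB (Set.mem_image_of_mem σ ht)
  have hTB : T ⊆ σ.symm '' B :=
    (A.inv_mem_subsetPreserving hσ B (A.isSubset_of_mem hB)).subset_of_mem hT ht
      ⟨σ t, htB, σ.symm_apply_apply t⟩
  exact (hBT.antisymm ((Equiv.subset_symm_image σ T B).1 hTB)) ▸ hB

end SRing

namespace SRing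

variable [CommGroup H] [Fintype H] {A : SRing H}

theorem IsSubset.image_pow_prime {S : Set H} (hS : A.IsSubset S) {p : ℕ} (hp : p.Prime)
    (hpH : (Nat.card H).Coprime p) : A.IsSubset ((· ^ p) '' S) := by
  have := Fact.mk hp
  set z := simpleQuantity ℤ S ^ p
  have hzQ : MonoidAlgebra.mapRingHom H (Int.castRingHom ℚ) z ∈ A.carrier := by
    rw [map_pow, map_simpleQuantity]
    exact A.toSubalgebra.pow_mem hS p
  have hzP : MonoidAlgebra.mapRingHom H (Int.castRingHom (ZMod p)) z =
      simpleQuantity (ZMod p) ((· ^ p) '' S) := by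
    rw [map_pow, map_simpleQuantity, simpleQuantity_pow_char p hpH.pow_left_bijective.1.injOn]
  refine A.isSubset_of_forall_subset fun B hB a haB haS b hbB => ?_
  have hz : z.coeff a = z.coeff b := by
    simpa using A.coeff_eq_of_mem_carrier hzQ hB haB hbB
  have hzP' := congrArg (fun x => x.coeff a = x.coeff b) hzP
  simp only [MonoidAlgebra.coeff_mapRingHom, hz, coeff_simpleQuantity, if_pos haS] at hzP'
  by_contra hbS
  simp [hbS] at hzP'

theorem IsSubset.image_pow {S : Set H} (hS : A.IsSubset S) {n : ℕ}
    (hn : (Nat.card H).Coprime n) : A.IsSubset ((· ^ n) '' S) := by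
  induction n using Nat.recOnMul generalizing S with
  | zero =>
    have : Subsingleton H := (Nat.card_eq_one_iff_unique.1 (Nat.coprime_zero_right _ |>.1 hn)).1
    exact A.isSubset_of_forall_subset fun B _ a _ ha b _ => Subsingleton.elim a b ▸ ha
  | one => simpa using hS
  | prime p hp => exact hS.image_pow_prime hp hn
  | mul a b iha ihb =>
    rw [Nat.coprime_mul_iff_right] at hn
    simpa [pow_mul, Set.image_image] using ihb (iha hS hn.1) hn.2

variable (A)

theorem image_pow_mem_basicSets {n : ℕ} (hn : (Nat.card H).Coprime n) {T : Set H}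
    (hT : T ∈ A.basicSets) : (· ^ n) '' T ∈ A.basicSets :=
  A.image_mem_basicSets (σ := powCoprime hn) (fun _ hS => hS.image_pow hn) hT

end SRing

/-- Schur's first theorem on multipliers. -/
theorem stmt15 {H : Type*} [CommGroup H] [Fintype H] (A : SRing H)
    (T : Set H) (hT : T ∈ A.basicSets) (k : ℤ)
    (hk : Int.gcd k (Fintype.card H) = 1) :
    (fun h : H => h ^ k) '' T ∈ A.basicSets := by
  have hn : (Nat.card H).Coprime k.natAbs := by
    simpa [Nat.card_eq_fintype_card, Int.gcd, Nat.coprime_comm] using hk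
  rcases Int.natAbs_eq k with hk' | hk'
  · rw [hk']
    simpa only [zpow_natCast] using A.image_pow_mem_basicSets hn hT
  · rw [hk']
    simpa only [← Set.image_inv_eq_inv, Set.image_image, inv_pow, zpow_neg, zpow_natCast] using
      A.image_pow_mem_basicSets hn (A.inv_mem T hT)
end
end
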